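/- arXiv:2604.23930 — 4 statements merged into one kernel-verified Lean document; each statement's English description precedes it below -/
import Mathlib

section
/- If ξ* = (w_1,…,w_N) minimizes the convex, linearly differentiable criterion Φ over the set Ξ of bounded approximate designs, i is an index with ν_i < w_i < μ_i, u is an index with w_u = μ_u, and ℓ is an index with w_ℓ = ν_ℓ, then F_Φ(ξ*; u) ≤ F_Φ(ξ*; i) ≤ F_Φ(ξ*; ℓ). -/
/-!
Moving a small mass `t > 0` from a coordinate `k` with `ν k < ξ k` to a coordinate `j` with
`ξ j < μ j` keeps the design `ξ` inside the bounded simplex. At a minimiser every feasible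
direction has nonnegative one-sided derivative, and by linear differentiability the derivative
towards `ξ + t (e_j - e_k)` is `F(ξ; ξ) + t (F(ξ; j) - F(ξ; k)) = t (F(ξ; j) - F(ξ; k))`.
Hence `F(ξ; k) ≤ F(ξ; j)`, which for `(j, k) = (i, u)` and `(ℓ, i)` gives both inequalities.
-/

open Filter Set Topology Matrix

section DirectionalDerivative

variable {E : Type*} [AddCommGroup E] [Module ℝ E] {Φ : E → ℝ} {ξ η : E} {L : ℝ}

lemma dirDeriv_self_eq_zero
    (h : Tendsto (fun α : ℝ => (Φ ((1 - α) • ξ + α • ξ) - Φ ξ) / α) (𝓝[>] 0) (𝓝 L)) :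
    L = 0 :=
  tendsto_nhds_unique h (by simp [← add_smul])

lemma dirDeriv_nonneg_of_isMinOn {S : Set E} (hS : Convex ℝ S) (hξ : ξ ∈ S) (hη : η ∈ S)
    (hmin : IsMinOn Φ S ξ)
    (h : Tendsto (fun α : ℝ => (Φ ((1 - α) • ξ + α • η) - Φ ξ) / α) (𝓝[>] 0) (𝓝 L)) :
    0 ≤ L := by
  refine ge_of_tendsto h ?_
  filter_upwards [Ioo_mem_nhdsGT (zero_lt_one' ℝ)] with α ⟨hα0, hα1⟩
  have hseg : (1 - α) • ξ + α • η ∈ S := hS hξ hη (by linarith) hα0.le (by ring)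
  exact div_nonneg (sub_nonneg.2 (hmin hseg)) hα0.le

end DirectionalDerivative

section MassTransfer

variable {ι : Type*} [DecidableEq ι] (ξ : ι → ℝ) (t : ℝ) (j k : ι)

lemma add_smul_single_sub_single_mem_Icc {ν μ : ι → ℝ} (hξ : ξ ∈ Icc ν μ) (hjk : j ≠ k)
    (ht : 0 ≤ t) (htj : t ≤ μ j - ξ j) (htk : t ≤ ξ k - ν k) :
    ξ + t • (Pi.single j 1 - Pi.single k 1) ∈ Icc ν μ := by
  obtain ⟨hν, hμ⟩ := hξ
  refine ⟨fun m => ?_, fun m => ?_⟩ <;>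
  · simp only [Pi.add_apply, Pi.smul_apply, Pi.sub_apply, Pi.single_apply, smul_eq_mul]
    split_ifs <;> subst_vars
    all_goals first | exact absurd rfl hjk | linarith [hν m, hμ m]

variable [Fintype ι]

lemma add_smul_single_sub_single_dotProduct (c : ι → ℝ) :
    (ξ + t • (Pi.single j 1 - Pi.single k 1)) ⬝ᵥ c = ξ ⬝ᵥ c + t * (c j - c k) := by
  simp [add_dotProduct, smul_dotProduct, sub_dotProduct]

lemma sum_add_smul_single_sub_single :
    ∑ m, (ξ + t • (Pi.single j 1 - Pi.single k 1) : ι → ℝ) m = ∑ m, ξ m := by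
  simpa [dotProduct_one] using add_smul_single_sub_single_dotProduct ξ t j k 1

end MassTransfer

section BoundedDesigns

variable {ι : Type*} [Fintype ι] [DecidableEq ι] {Φ : (ι → ℝ) → ℝ} {F : (ι → ℝ) → ℝ}
  {ν μ ξ : ι → ℝ}

lemma add_smul_single_sub_single_mem_stdSimplex_inter_Icc (hν : 0 ≤ ν)
    (hξ : ξ ∈ stdSimplex ℝ ι ∩ Icc ν μ) {j k : ι} (hjk : j ≠ k) {t : ℝ} (ht : 0 ≤ t)
    (htj : t ≤ μ j - ξ j) (htk : t ≤ ξ k - ν k) :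
    ξ + t • (Pi.single j 1 - Pi.single k 1) ∈ stdSimplex ℝ ι ∩ Icc ν μ := by
  have hbox := add_smul_single_sub_single_mem_Icc ξ t j k hξ.2 hjk ht htj htk
  exact ⟨⟨fun m => (hν m).trans (hbox.1 m),
    by rw [sum_add_smul_single_sub_single, hξ.1.2]⟩, hbox⟩

theorem dirDeriv_single_le_of_isMinOn (hν : 0 ≤ ν)
    (hF : ∀ η ∈ stdSimplex ℝ ι,
      Tendsto (fun α : ℝ => (Φ ((1 - α) • ξ + α • η) - Φ ξ) / α) (𝓝[>] 0) (𝓝 (F η)))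
    (hlin : ∀ η ∈ stdSimplex ℝ ι, F η = η ⬝ᵥ fun m => F (Pi.single m 1))
    (hξ : ξ ∈ stdSimplex ℝ ι ∩ Icc ν μ) (hmin : IsMinOn Φ (stdSimplex ℝ ι ∩ Icc ν μ) ξ)
    {j k : ι} (hjk : j ≠ k) (hj : ξ j < μ j) (hk : ν k < ξ k) :
    F (Pi.single k 1) ≤ F (Pi.single j 1) := by
  obtain ⟨t, ht0, htj, htk⟩ : ∃ t : ℝ, 0 < t ∧ t ≤ μ j - ξ j ∧ t ≤ ξ k - ν k :=
    ⟨_, lt_min (by linarith) (by linarith), min_le_left _ _, min_le_right _ _⟩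
  have hη := add_smul_single_sub_single_mem_stdSimplex_inter_Icc hν hξ hjk ht0.le htj htk
  have hFξ : (ξ ⬝ᵥ fun m => F (Pi.single m 1)) = 0 := by
    rw [← hlin ξ hξ.1]
    exact dirDeriv_self_eq_zero (hF ξ hξ.1)
  have hFη := dirDeriv_nonneg_of_isMinOn ((convex_stdSimplex ℝ ι).inter (convex_Icc ν μ))
    hξ hη hmin (hF _ hη.1)
  rw [hlin _ hη.1, add_smul_single_sub_single_dotProduct, hFξ, zero_add] at hFη
  exact sub_nonneg.1 (nonneg_of_mul_nonneg_right hFη ht0)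

end BoundedDesigns

theorem stmt_1_general
    (N : ℕ)
    (Δ : Set (Fin N → ℝ))
    (hΔ : Δ = {w : Fin N → ℝ | (∀ i, 0 ≤ w i) ∧ ∑ i, w i = 1})
    (Φ : (Fin N → ℝ) → ℝ)
    (F : (Fin N → ℝ) → (Fin N → ℝ) → ℝ)
    (hF : ∀ ξ ∈ Δ, ∀ η ∈ Δ,
      Filter.Tendsto (fun α : ℝ => (Φ ((1 - α) • ξ + α • η) - Φ ξ) / α)
        (nhdsWithin 0 (Set.Ioi 0)) (nhds (F ξ η)))
    (hlin : ∀ ξ ∈ Δ, ∀ η ∈ Δ, F ξ η = ∑ i, η i * F ξ (Pi.single i 1))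
    (ν μ : Fin N → ℝ)
    (hν0 : ∀ i, 0 ≤ ν i) (hνμ : ∀ i, ν i < μ i)
    (Ξ : Set (Fin N → ℝ))
    (hΞ : Ξ = {w : Fin N → ℝ | w ∈ Δ ∧ ∀ i, ν i ≤ w i ∧ w i ≤ μ i})
    (ξs : Fin N → ℝ) (hmem : ξs ∈ Ξ)
    (hopt : ∀ ξ ∈ Ξ, Φ ξs ≤ Φ ξ)
    (i u l : Fin N)
    (hi : ν i < ξs i ∧ ξs i < μ i)
    (hu : ξs u = μ u)
    (hl : ξs l = ν l) :
    F ξs (Pi.single u 1) ≤ F ξs (Pi.single i 1) ∧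
      F ξs (Pi.single i 1) ≤ F ξs (Pi.single l 1) := by
  have hΞ' : Ξ = stdSimplex ℝ (Fin N) ∩ Icc ν μ := by
    ext w
    simp only [hΞ, hΔ, stdSimplex, Pi.le_def, forall_and, mem_ofPred_eq, mem_inter_iff, mem_Icc]
  subst hΔ
  rw [hΞ'] at hmem hopt
  have key : ∀ {j k}, j ≠ k → ξs j < μ j → ν k < ξs k →
      F ξs (Pi.single k 1) ≤ F ξs (Pi.single j 1) :=
    dirDeriv_single_le_of_isMinOn hν0 (hF ξs hmem.1) (hlin ξs hmem.1) hmem (isMinOn_iff.2 hopt)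
  have hui : u ≠ i := by rintro rfl; exact hi.2.ne hu
  have hil : i ≠ l := by rintro rfl; exact hi.1.ne' hl
  exact ⟨key hui.symm hi.2 (hu ▸ hνμ u), key hil.symm (hl ▸ hνμ l) hi.1⟩

theorem stmt_1
    (N : ℕ) (hN : 1 ≤ N)
    (Δ : Set (Fin N → ℝ))
    (hΔ : Δ = {w : Fin N → ℝ | (∀ i, 0 ≤ w i) ∧ ∑ i, w i = 1})
    (Φ : (Fin N → ℝ) → ℝ)
    (hconv : ConvexOn ℝ Δ Φ)
    (F : (Fin N → ℝ) → (Fin N → ℝ) → ℝ)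
    (hF : ∀ ξ ∈ Δ, ∀ η ∈ Δ,
      Filter.Tendsto (fun α : ℝ => (Φ ((1 - α) • ξ + α • η) - Φ ξ) / α)
        (nhdsWithin 0 (Set.Ioi 0)) (nhds (F ξ η)))
    (hlin : ∀ ξ ∈ Δ, ∀ η ∈ Δ, F ξ η = ∑ i, η i * F ξ (Pi.single i 1))
    (ν μ : Fin N → ℝ)
    (hν0 : ∀ i, 0 ≤ ν i) (hνμ : ∀ i, ν i < μ i) (hμ1 : ∀ i, μ i ≤ 1)
    (hνsum : ∑ i, ν i ≤ 1) (hμsum : 1 ≤ ∑ i, μ i)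
    (Ξ : Set (Fin N → ℝ))
    (hΞ : Ξ = {w : Fin N → ℝ | w ∈ Δ ∧ ∀ i, ν i ≤ w i ∧ w i ≤ μ i})
    (ξs : Fin N → ℝ) (hmem : ξs ∈ Ξ)
    (hopt : ∀ ξ ∈ Ξ, Φ ξs ≤ Φ ξ)
    (i u l : Fin N)
    (hi : ν i < ξs i ∧ ξs i < μ i)
    (hu : ξs u = μ u)
    (hl : ξs l = ν l) :
    F ξs (Pi.single u 1) ≤ F ξs (Pi.single i 1) ∧
      F ξs (Pi.single i 1) ≤ F ξs (Pi.single l 1) :=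
  stmt_1_general N Δ hΔ Φ F hF hlin ν μ hν0 hνμ Ξ hΞ ξs hmem hopt i u l hi hu hl
end

section
/- If ξ* = (w_1,…,w_N) minimizes the convex, linearly differentiable criterion Φ over the set Ξ of bounded approximate designs, u is an index with w_u = μ_u, and ℓ is an index with w_ℓ = ν_ℓ, then F_Φ(ξ*; u) ≤ F_Φ(ξ*; ℓ). In particular, if every index i satisfies either w_i = ν_i or w_i = μ_i, then max over {i : w_i = μ_i} of F_Φ(ξ*; i) is at most min over {i : w_i = ν_i} of F_Φ(ξ*; i). -/
/-!
Moving a small amount ε of mass from an index `u` at its upper bound to an index `ℓ` at its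
lower bound keeps the design feasible. Since `ξ*` is optimal and the feasible set is convex, the
directional derivative towards this perturbed design is nonnegative; by linear differentiability
(and `F_Φ(ξ*, ξ*) = 0`) it equals `ε (F_Φ(ξ*; ℓ) - F_Φ(ξ*; u))`.
-/

open Set Filter Topology

section Slope

variable {E : Type*} [AddCommGroup E] [Module ℝ E] {f : E → ℝ} {x y : E} {d : ℝ}

theorem IsMinOn.nonneg_of_tendsto_slope_toward {s : Set E} (hs : Convex ℝ s)
    (hmin : IsMinOn f s x) (hx : x ∈ s) (hy : y ∈ s)
    (hd : Tendsto (fun α : ℝ => (f ((1 - α) • x + α • y) - f x) / α) (𝓝[>] 0) (𝓝 d)) :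
    0 ≤ d := by
  refine ge_of_tendsto hd ?_
  filter_upwards [Ioo_mem_nhdsGT one_pos] with α ⟨hα₀, hα₁⟩
  have hseg : (1 - α) • x + α • y ∈ s := hs hx hy (by linarith) hα₀.le (by ring)
  exact div_nonneg (sub_nonneg.2 (hmin hseg)) hα₀.le

theorem eq_zero_of_tendsto_slope_toward_self
    (hd : Tendsto (fun α : ℝ => (f ((1 - α) • x + α • x) - f x) / α) (𝓝[>] 0) (𝓝 d)) :
    d = 0 := by
  refine tendsto_nhds_unique hd ?_
  simp only [← add_smul, sub_add_cancel, one_smul, sub_self, zero_div]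
  exact tendsto_const_nhds

end Slope

section MassTransfer

variable {ι : Type*} [DecidableEq ι]

theorem add_smul_single_sub_single_mem_Icc_s2 {ν μ w : ι → ℝ} (hw : w ∈ Icc ν μ) {u l : ι}
    (hul : u ≠ l) {ε : ℝ} (hε₀ : 0 ≤ ε) (hεu : ε ≤ w u - ν u) (hεl : ε ≤ μ l - w l) :
    w + ε • (Pi.single l 1 - Pi.single u 1) ∈ Icc ν μ := by
  constructor <;> intro i <;> have := hw.1 i <;> have := hw.2 i <;>
    rcases eq_or_ne i u with rfl | hiu <;> rcases eq_or_ne i l with rfl | hil <;>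
    simp_all <;> linarith

variable [Fintype ι]

theorem sum_add_smul_single_sub_single_mul (w g : ι → ℝ) (ε : ℝ) (u l : ι) :
    ∑ i, (w + ε • (Pi.single l 1 - Pi.single u 1) : ι → ℝ) i * g i
      = ∑ i, w i * g i + ε * (g l - g u) := by
  simp [add_mul, sub_mul, mul_sub, Finset.sum_add_distrib, Finset.sum_sub_distrib, Pi.single_apply,
    ite_mul]

theorem le_of_isMinOn_stdSimplex_inter_Icc {Φ : (ι → ℝ) → ℝ} {ξ ν μ : ι → ℝ} {F : (ι → ℝ) → ℝ}
    (hF : ∀ η ∈ stdSimplex ℝ ι ∩ Icc ν μ,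
      Tendsto (fun α : ℝ => (Φ ((1 - α) • ξ + α • η) - Φ ξ) / α) (𝓝[>] 0) (𝓝 (F η)))
    (hlin : ∀ η ∈ stdSimplex ℝ ι ∩ Icc ν μ, F η = ∑ i, η i * F (Pi.single i 1))
    (hν₀ : ∀ i, 0 ≤ ν i) (hνμ : ∀ i, ν i < μ i)
    (hξ : ξ ∈ stdSimplex ℝ ι ∩ Icc ν μ) (hmin : IsMinOn Φ (stdSimplex ℝ ι ∩ Icc ν μ) ξ)
    {u l : ι} (hu : ξ u = μ u) (hl : ξ l = ν l) :
    F (Pi.single u 1) ≤ F (Pi.single l 1) := by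
  have hul : u ≠ l := by
    rintro rfl
    exact (hνμ u).ne (hl.symm.trans hu)
  set g : ι → ℝ := fun i => F (Pi.single i 1)
  set ε := min (μ u - ν u) (μ l - ν l)
  have hε₀ : 0 < ε := lt_min (sub_pos.2 (hνμ u)) (sub_pos.2 (hνμ l))
  set η := ξ + ε • (Pi.single l 1 - Pi.single u 1)
  have hηIcc : η ∈ Icc ν μ := add_smul_single_sub_single_mem_Icc_s2 hξ.2 hul hε₀.le
    (by rw [hu]; exact min_le_left _ _) (by rw [hl]; exact min_le_right _ _)
  have hηsum : ∑ i, η i = 1 := by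
    have h := sum_add_smul_single_sub_single_mul ξ 1 ε u l
    simp only [Pi.one_apply, mul_one, sub_self, mul_zero, add_zero, hξ.1.2] at h
    exact h
  have hη : η ∈ stdSimplex ℝ ι ∩ Icc ν μ :=
    ⟨⟨fun i => (hν₀ i).trans (hηIcc.1 i), hηsum⟩, hηIcc⟩
  have hFξ : ∑ i, ξ i * g i = 0 := (hlin ξ hξ).symm.trans
    (eq_zero_of_tendsto_slope_toward_self (hF ξ hξ))
  have hFη : F η = ε * (g l - g u) := by
    rw [hlin η hη, ← zero_add (ε * _), ← hFξ]
    exact sum_add_smul_single_sub_single_mul ξ g ε u l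
  have hFη₀ : 0 ≤ F η :=
    hmin.nonneg_of_tendsto_slope_toward ((convex_stdSimplex ℝ ι).inter (convex_Icc ν μ)) hξ hη
      (hF η hη)
  rw [hFη] at hFη₀
  exact sub_nonneg.1 (nonneg_of_mul_nonneg_right hFη₀ hε₀)

end MassTransfer

theorem stmt_2_general
    (N : ℕ)
    (Δ : Set (Fin N → ℝ))
    (hΔ : Δ = {w : Fin N → ℝ | (∀ i, 0 ≤ w i) ∧ ∑ i, w i = 1})
    (Φ : (Fin N → ℝ) → ℝ)
    (F : (Fin N → ℝ) → (Fin N → ℝ) → ℝ)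
    (hF : ∀ ξ ∈ Δ, ∀ η ∈ Δ,
      Filter.Tendsto (fun α : ℝ => (Φ ((1 - α) • ξ + α • η) - Φ ξ) / α)
        (nhdsWithin 0 (Set.Ioi 0)) (nhds (F ξ η)))
    (hlin : ∀ ξ ∈ Δ, ∀ η ∈ Δ, F ξ η = ∑ i, η i * F ξ (Pi.single i 1))
    (ν μ : Fin N → ℝ)
    (hν0 : ∀ i, 0 ≤ ν i) (hνμ : ∀ i, ν i < μ i)
    (Ξ : Set (Fin N → ℝ))
    (hΞ : Ξ = {w : Fin N → ℝ | w ∈ Δ ∧ ∀ i, ν i ≤ w i ∧ w i ≤ μ i})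
    (ξs : Fin N → ℝ) (hmem : ξs ∈ Ξ)
    (hopt : ∀ ξ ∈ Ξ, Φ ξs ≤ Φ ξ)
    (u l : Fin N)
    (hu : ξs u = μ u)
    (hl : ξs l = ν l) :
    F ξs (Pi.single u 1) ≤ F ξs (Pi.single l 1) ∧
      ((∀ k, ξs k = ν k ∨ ξs k = μ k) →
        ∀ u' l', ξs u' = μ u' → ξs l' = ν l' →
          F ξs (Pi.single u' 1) ≤ F ξs (Pi.single l' 1)) := by
  have hΔ' : Δ = stdSimplex ℝ (Fin N) := hΔ
  have hΞ' : Ξ = stdSimplex ℝ (Fin N) ∩ Icc ν μ := by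
    rw [hΞ, ← hΔ']
    ext w
    simp only [mem_ofPred_eq, mem_inter_iff, mem_Icc, Pi.le_def, forall_and]
  subst hΔ' hΞ'
  have key : ∀ u l, ξs u = μ u → ξs l = ν l → F ξs (Pi.single u 1) ≤ F ξs (Pi.single l 1) :=
    fun u l hu hl => le_of_isMinOn_stdSimplex_inter_Icc (fun η hη => hF ξs hmem.1 η hη.1)
      (fun η hη => hlin ξs hmem.1 η hη.1) hν0 hνμ hmem hopt hu hl
  exact ⟨key u l hu hl, fun _ => key⟩

theorem stmt_2
    (N : ℕ) (hN : 1 ≤ N)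
    (Δ : Set (Fin N → ℝ))
    (hΔ : Δ = {w : Fin N → ℝ | (∀ i, 0 ≤ w i) ∧ ∑ i, w i = 1})
    (Φ : (Fin N → ℝ) → ℝ)
    (hconv : ConvexOn ℝ Δ Φ)
    (F : (Fin N → ℝ) → (Fin N → ℝ) → ℝ)
    (hF : ∀ ξ ∈ Δ, ∀ η ∈ Δ,
      Filter.Tendsto (fun α : ℝ => (Φ ((1 - α) • ξ + α • η) - Φ ξ) / α)
        (nhdsWithin 0 (Set.Ioi 0)) (nhds (F ξ η)))
    (hlin : ∀ ξ ∈ Δ, ∀ η ∈ Δ, F ξ η = ∑ i, η i * F ξ (Pi.single i 1))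
    (ν μ : Fin N → ℝ)
    (hν0 : ∀ i, 0 ≤ ν i) (hνμ : ∀ i, ν i < μ i) (hμ1 : ∀ i, μ i ≤ 1)
    (hνsum : ∑ i, ν i ≤ 1) (hμsum : 1 ≤ ∑ i, μ i)
    (Ξ : Set (Fin N → ℝ))
    (hΞ : Ξ = {w : Fin N → ℝ | w ∈ Δ ∧ ∀ i, ν i ≤ w i ∧ w i ≤ μ i})
    (ξs : Fin N → ℝ) (hmem : ξs ∈ Ξ)
    (hopt : ∀ ξ ∈ Ξ, Φ ξs ≤ Φ ξ)
    (u l : Fin N)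
    (hu : ξs u = μ u)
    (hl : ξs l = ν l) :
    F ξs (Pi.single u 1) ≤ F ξs (Pi.single l 1) ∧
      ((∀ k, ξs k = ν k ∨ ξs k = μ k) →
        ∀ u' l', ξs u' = μ u' → ξs l' = ν l' →
          F ξs (Pi.single u' 1) ≤ F ξs (Pi.single l' 1)) :=
  stmt_2_general N Δ hΔ Φ F hF hlin ν μ hν0 hνμ Ξ hΞ ξs hmem hopt u l hu hl
end

section
/- Let ξ = (w_1,…,w_N) ∈ Ξ with X_1(ξ) = {i : w_i = 0}, X_3(ξ) = {i : w_i = 1/n}, X_2(ξ) = {i : 0 < w_i < 1/n}, and suppose there exist ξ_0 ∈ Ξ and δ > 0 with Φ(ξ) − Φ(ξ_0) > δ. If X_2(ξ) is empty, then min_{i ∈ X_1(ξ)} F_Φ(ξ; i) − max_{i ∈ X_3(ξ)} F_Φ(ξ; i) ≤ −δ. -/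
/-!
Write `f i = F(ξ; i)`. Linear differentiability and `F(ξ, ξ) = 0` give
`F(ξ, ξ₀) = ∑ (ξ₀ i - ξ i) f i`, while convexity gives `F(ξ, ξ₀) ≤ Φ ξ₀ - Φ ξ < -δ`.
When every weight of `ξ` is `0` or `1/n`, the increment `ξ₀ - ξ` is nonnegative on `X₁`,
nonpositive on `X₃` and sums to zero, so with `t = ∑_{X₁} (ξ₀ - ξ) ∈ [0, 1]` the sum is at least
`t (min_{X₁} f - max_{X₃} f)`. Hence `t (min - max) < -δ`, which forces `min - max < -δ`.
-/

open Filter Topology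

theorem ConvexOn.le_sub_of_tendsto_slope {E : Type*} [AddCommGroup E] [Module ℝ E]
    {s : Set E} {Φ : E → ℝ} (hΦ : ConvexOn ℝ s Φ) {x y : E} (hx : x ∈ s) (hy : y ∈ s)
    {d : ℝ} (hd : Tendsto (fun α : ℝ => (Φ ((1 - α) • x + α • y) - Φ x) / α) (𝓝[>] 0) (𝓝 d)) :
    d ≤ Φ y - Φ x := by
  refine le_of_tendsto hd ?_
  filter_upwards [Ioc_mem_nhdsGT (zero_lt_one' ℝ)] with α ⟨hα0, hα1⟩
  have hseg := hΦ.2 hx hy (sub_nonneg.2 hα1) hα0.le (sub_add_cancel 1 α)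
  rw [smul_eq_mul, smul_eq_mul] at hseg
  rw [div_le_iff₀ hα0]
  linarith

theorem eq_zero_of_tendsto_slope_self {E : Type*} [AddCommGroup E] [Module ℝ E]
    {Φ : E → ℝ} {x : E} {d : ℝ}
    (hd : Tendsto (fun α : ℝ => (Φ ((1 - α) • x + α • x) - Φ x) / α) (𝓝[>] 0) (𝓝 d)) :
    d = 0 := by
  have hconst : (fun α : ℝ => (Φ ((1 - α) • x + α • x) - Φ x) / α) = fun _ => 0 := by
    funext α
    rw [← add_smul, sub_add_cancel, one_smul, sub_self, zero_div]
  rw [hconst] at hd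
  exact tendsto_nhds_unique hd tendsto_const_nhds

theorem Finset.sum_mul_mul_sub_le_sum_mul {ι : Type*} [Fintype ι] [DecidableEq ι]
    (A : Finset ι) {d f : ι → ℝ} {m M : ℝ} (hd : ∑ i, d i = 0)
    (hdA : ∀ i ∈ A, 0 ≤ d i) (hdAc : ∀ i ∉ A, d i ≤ 0)
    (hm : ∀ i ∈ A, m ≤ f i) (hM : ∀ i ∉ A, f i ≤ M) :
    (∑ i ∈ A, d i) * (m - M) ≤ ∑ i, d i * f i := by
  have hsplit (g : ι → ℝ) : ∑ i, g i = ∑ i ∈ A, g i + ∑ i ∈ Aᶜ, g i :=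
    (Finset.sum_add_sum_compl A g).symm
  have hA : (∑ i ∈ A, d i) * m ≤ ∑ i ∈ A, d i * f i := by
    rw [Finset.sum_mul]
    exact Finset.sum_le_sum fun i hi => mul_le_mul_of_nonneg_left (hm i hi) (hdA i hi)
  have hAc : (∑ i ∈ Aᶜ, d i) * M ≤ ∑ i ∈ Aᶜ, d i * f i := by
    rw [Finset.sum_mul]
    refine Finset.sum_le_sum fun i hi => ?_
    rw [Finset.mem_compl] at hi
    exact mul_le_mul_of_nonpos_left (hM i hi) (hdAc i hi)
  have hcompl : ∑ i ∈ Aᶜ, d i = -∑ i ∈ A, d i := by linarith [hsplit d]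
  rw [hsplit fun i => d i * f i]
  rw [hcompl] at hAc
  linarith

theorem exists_mul_sInf_sub_sSup_le_sum_sub_mul {ι : Type*} [Fintype ι] {ξ ξ₀ f : ι → ℝ} {c : ℝ}
    (hξ : ∑ i, ξ i = 1) (hξ₀ : ∀ i, 0 ≤ ξ₀ i) (hξ₀_sum : ∑ i, ξ₀ i = 1) (hξ₀c : ∀ i, ξ₀ i ≤ c)
    (hξc : ∀ i, ξ i ≠ 0 → ξ i = c) :
    ∃ t ∈ Set.Icc (0 : ℝ) 1,
      t * (sInf (f '' {i | ξ i = 0}) - sSup (f '' {i | ξ i = c})) ≤ ∑ i, (ξ₀ i - ξ i) * f i := by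
  classical
  set A := Finset.univ.filter fun i => ξ i = 0
  have hAc (i : ι) (hi : i ∉ A) : ξ i = c := hξc i (by simpa [A] using hi)
  have ht : ∑ i ∈ A, (ξ₀ i - ξ i) = ∑ i ∈ A, ξ₀ i :=
    Finset.sum_congr rfl fun i hi => by simp [(Finset.mem_filter.1 hi).2]
  refine ⟨∑ i ∈ A, ξ₀ i, ⟨Finset.sum_nonneg fun i _ => hξ₀ i,
    hξ₀_sum ▸ Finset.sum_le_univ_sum_of_nonneg hξ₀⟩, ?_⟩
  rw [← ht]
  refine Finset.sum_mul_mul_sub_le_sum_mul A (d := fun i => ξ₀ i - ξ i)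
    (by simp [Finset.sum_sub_distrib, hξ, hξ₀_sum]) ?_ ?_ ?_ ?_
  · exact fun i hi => by simp [(Finset.mem_filter.1 hi).2, hξ₀ i]
  · exact fun i hi => by simpa [hAc i hi] using hξ₀c i
  · exact fun i hi => csInf_le (Set.toFinite _).bddBelow ⟨i, (Finset.mem_filter.1 hi).2, rfl⟩
  · exact fun i hi => le_csSup (Set.toFinite _).bddAbove ⟨i, hAc i hi, rfl⟩

theorem le_neg_of_mul_lt_neg {t x δ : ℝ} (ht0 : 0 ≤ t) (ht1 : t ≤ 1) (hδ : 0 ≤ δ)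
    (h : t * x < -δ) : x ≤ -δ := by
  rcases le_or_gt 0 x with hx | hx
  · nlinarith [mul_nonneg ht0 hx]
  · nlinarith [mul_le_mul_of_nonpos_right ht1 hx.le]

theorem stmt_6_general
    (N : ℕ)
    (Δ : Set (Fin N → ℝ))
    (hΔ : Δ = {w : Fin N → ℝ | (∀ i, 0 ≤ w i) ∧ ∑ i, w i = 1})
    (Φ : (Fin N → ℝ) → ℝ)
    (hconv : ConvexOn ℝ Δ Φ)
    (F : (Fin N → ℝ) → (Fin N → ℝ) → ℝ)
    (hF : ∀ ξ ∈ Δ, ∀ η ∈ Δ,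
      Filter.Tendsto (fun α : ℝ => (Φ ((1 - α) • ξ + α • η) - Φ ξ) / α)
        (nhdsWithin 0 (Set.Ioi 0)) (nhds (F ξ η)))
    (hlin : ∀ ξ ∈ Δ, ∀ η ∈ Δ, F ξ η = ∑ i, η i * F ξ (Pi.single i 1))
    (n : ℕ)
    (Ξ : Set (Fin N → ℝ))
    (hΞ : Ξ = {w : Fin N → ℝ | w ∈ Δ ∧ ∀ i, w i ≤ 1 / (n : ℝ)})
    (ξ : Fin N → ℝ) (hmem : ξ ∈ Ξ)
    (X1 X2 X3 : Set (Fin N))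
    (hX1 : X1 = {i | ξ i = 0})
    (hX2 : X2 = {i | 0 < ξ i ∧ ξ i < 1 / (n : ℝ)})
    (hX3 : X3 = {i | ξ i = 1 / (n : ℝ)})
    (ξ0 : Fin N → ℝ) (hξ0 : ξ0 ∈ Ξ)
    (δ : ℝ) (hδ : 0 < δ)
    (hgap : Φ ξ - Φ ξ0 > δ)
    (hX2e : X2 = ∅) :
    sInf ((fun i => F ξ (Pi.single i 1)) '' X1)
      - sSup ((fun i => F ξ (Pi.single i 1)) '' X3) ≤ -δ := by
  subst hΔ hΞ hX1 hX3
  obtain ⟨hξΔ, hξle⟩ := hmem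
  obtain ⟨hξ0Δ, hξ0le⟩ := hξ0
  have hξc (i : Fin N) (hi : ξ i ≠ 0) : ξ i = 1 / n := by
    by_contra hi'
    have hiX2 : i ∈ X2 := hX2 ▸ ⟨(hξΔ.1 i).lt_of_ne' hi, (hξle i).lt_of_ne hi'⟩
    simp [hX2e] at hiX2
  have hpair : F ξ ξ0 = ∑ i, (ξ0 i - ξ i) * F ξ (Pi.single i 1) := by
    have hself := hlin ξ hξΔ ξ hξΔ
    rw [eq_zero_of_tendsto_slope_self (hF ξ hξΔ ξ hξΔ)] at hself
    rw [hlin ξ hξΔ ξ0 hξ0Δ, ← sub_zero (∑ i, _), hself]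
    simp only [sub_mul, Finset.sum_sub_distrib]
  have hslope := hconv.le_sub_of_tendsto_slope hξΔ hξ0Δ (hF ξ hξΔ ξ0 hξ0Δ)
  obtain ⟨t, ⟨ht0, ht1⟩, hbound⟩ :=
    exists_mul_sInf_sub_sSup_le_sum_sub_mul hξΔ.2 hξ0Δ.1 hξ0Δ.2 hξ0le hξc
  exact le_neg_of_mul_lt_neg ht0 ht1 hδ.le (hbound.trans_lt (by linarith))

theorem stmt_6
    (N : ℕ) (hN : 1 ≤ N)
    (Δ : Set (Fin N → ℝ))
    (hΔ : Δ = {w : Fin N → ℝ | (∀ i, 0 ≤ w i) ∧ ∑ i, w i = 1})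
    (Φ : (Fin N → ℝ) → ℝ)
    (hconv : ConvexOn ℝ Δ Φ)
    (F : (Fin N → ℝ) → (Fin N → ℝ) → ℝ)
    (hF : ∀ ξ ∈ Δ, ∀ η ∈ Δ,
      Filter.Tendsto (fun α : ℝ => (Φ ((1 - α) • ξ + α • η) - Φ ξ) / α)
        (nhdsWithin 0 (Set.Ioi 0)) (nhds (F ξ η)))
    (hlin : ∀ ξ ∈ Δ, ∀ η ∈ Δ, F ξ η = ∑ i, η i * F ξ (Pi.single i 1))
    (n : ℕ) (hn1 : 1 ≤ n) (hnN : n ≤ N)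
    (Ξ : Set (Fin N → ℝ))
    (hΞ : Ξ = {w : Fin N → ℝ | w ∈ Δ ∧ ∀ i, w i ≤ 1 / (n : ℝ)})
    (ξ : Fin N → ℝ) (hmem : ξ ∈ Ξ)
    (X1 X2 X3 : Set (Fin N))
    (hX1 : X1 = {i | ξ i = 0})
    (hX2 : X2 = {i | 0 < ξ i ∧ ξ i < 1 / (n : ℝ)})
    (hX3 : X3 = {i | ξ i = 1 / (n : ℝ)})
    (ξ0 : Fin N → ℝ) (hξ0 : ξ0 ∈ Ξ)
    (δ : ℝ) (hδ : 0 < δ)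
    (hgap : Φ ξ - Φ ξ0 > δ)
    (hX2e : X2 = ∅) :
    sInf ((fun i => F ξ (Pi.single i 1)) '' X1)
      - sSup ((fun i => F ξ (Pi.single i 1)) '' X3) ≤ -δ :=
  stmt_6_general N Δ hΔ Φ hconv F hF hlin n Ξ hΞ ξ hmem X1 X2 X3 hX1 hX2 hX3 ξ0 hξ0 δ hδ hgap hX2e
end

section
/- Let ξ = (w_1,…,w_N) ∈ Ξ with X_1(ξ) = {i : w_i = 0}, X_3(ξ) = {i : w_i = 1/n}, X_2(ξ) = {i : 0 < w_i < 1/n}, suppose F_Φ(ξ; i) = s for every i ∈ X_2(ξ), and suppose there exist ξ_0 ∈ Ξ and δ > 0 with Φ(ξ) − Φ(ξ_0) > δ. If X_2(ξ) is nonempty and X_3(ξ) is empty, then X_1(ξ) is nonempty and min_{i ∈ X_1(ξ)} F_Φ(ξ; i) − s ≤ −δ. -/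
/-!
By convexity the one-sided directional derivative is a lower bound for the increment:
`F(ξ, ξ₀) ≤ Φ(ξ₀) - Φ(ξ) < -δ`. Since `X₃(ξ)` is empty, `ξ` is supported on `X₂(ξ)`, so
linear differentiability and `F(ξ, ξ) = 0` force `s = Σ ξᵢ s = 0`. Hence in
`F(ξ, ξ₀) = Σ ξ₀ᵢ F(ξ; i)` only the indices of `X₁(ξ)` contribute, and as the weights `ξ₀ᵢ`
have total mass at most `1`, some `F(ξ; i)` with `i ∈ X₁(ξ)` lies below `-δ`.
-/

open Filter Topology Finset

theorem ConvexOn.le_sub_of_tendsto_slope_segment {E : Type*} [AddCommGroup E] [Module ℝ E]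
    {s : Set E} {f : E → ℝ} (hf : ConvexOn ℝ s f) {x y : E} (hx : x ∈ s) (hy : y ∈ s)
    {d : ℝ} (hd : Tendsto (fun α : ℝ => (f ((1 - α) • x + α • y) - f x) / α) (𝓝[>] 0) (𝓝 d)) :
    d ≤ f y - f x := by
  refine le_of_tendsto hd ?_
  filter_upwards [Ioo_mem_nhdsGT (zero_lt_one' ℝ)] with α ⟨hα0, hα1⟩
  have hseg : f ((1 - α) • x + α • y) ≤ (1 - α) * f x + α * f y :=
    hf.2 hx hy (by linarith) hα0.le (by ring)
  rw [div_le_iff₀ hα0]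
  linarith

theorem tendsto_slope_segment_self_eq_zero {E : Type*} [AddCommGroup E] [Module ℝ E]
    {f : E → ℝ} {x : E} {d : ℝ}
    (hd : Tendsto (fun α : ℝ => (f ((1 - α) • x + α • x) - f x) / α) (𝓝[>] 0) (𝓝 d)) :
    d = 0 := by
  have hconst : (fun α : ℝ => (f ((1 - α) • x + α • x) - f x) / α) = fun _ => 0 := by
    funext α
    rw [← add_smul, sub_add_cancel, one_smul, sub_self, zero_div]
  rw [hconst] at hd
  exact tendsto_nhds_unique hd tendsto_const_nhds

theorem Finset.sum_mul_eq_of_forall_ne_zero {ι : Type*} {t : Finset ι} {w g : ι → ℝ} {c : ℝ}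
    (hg : ∀ i ∈ t, w i ≠ 0 → g i = c) : ∑ i ∈ t, w i * g i = (∑ i ∈ t, w i) * c := by
  rw [Finset.sum_mul]
  refine Finset.sum_congr rfl fun i hi => ?_
  rcases eq_or_ne (w i) 0 with h | h
  · simp [h]
  · rw [hg i hi h]

theorem Finset.exists_lt_of_sum_mul_lt {ι : Type*} {t : Finset ι} {v g : ι → ℝ} {c : ℝ}
    (hv : ∀ i ∈ t, 0 ≤ v i) (hv1 : ∑ i ∈ t, v i ≤ 1) (hc : c ≤ 0)
    (h : ∑ i ∈ t, v i * g i < c) : ∃ i ∈ t, g i < c := by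
  by_contra! hg
  have hlower : c * ∑ i ∈ t, v i ≤ ∑ i ∈ t, v i * g i := by
    rw [Finset.mul_sum]
    exact Finset.sum_le_sum fun i hi => by nlinarith [hv i hi, hg i hi]
  nlinarith [Finset.sum_nonneg hv]

theorem stmt_8_general
    (N : ℕ)
    (Δ : Set (Fin N → ℝ))
    (hΔ : Δ = {w : Fin N → ℝ | (∀ i, 0 ≤ w i) ∧ ∑ i, w i = 1})
    (Φ : (Fin N → ℝ) → ℝ)
    (hconv : ConvexOn ℝ Δ Φ)
    (F : (Fin N → ℝ) → (Fin N → ℝ) → ℝ)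
    (hF : ∀ ξ ∈ Δ, ∀ η ∈ Δ,
      Filter.Tendsto (fun α : ℝ => (Φ ((1 - α) • ξ + α • η) - Φ ξ) / α)
        (nhdsWithin 0 (Set.Ioi 0)) (nhds (F ξ η)))
    (hlin : ∀ ξ ∈ Δ, ∀ η ∈ Δ, F ξ η = ∑ i, η i * F ξ (Pi.single i 1))
    (n : ℕ)
    (Ξ : Set (Fin N → ℝ))
    (hΞ : Ξ = {w : Fin N → ℝ | w ∈ Δ ∧ ∀ i, w i ≤ 1 / (n : ℝ)})
    (ξ : Fin N → ℝ) (hmem : ξ ∈ Ξ)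
    (X1 X2 X3 : Set (Fin N))
    (hX1 : X1 = {i | ξ i = 0})
    (hX2 : X2 = {i | 0 < ξ i ∧ ξ i < 1 / (n : ℝ)})
    (hX3 : X3 = {i | ξ i = 1 / (n : ℝ)})
    (s : ℝ) (hs : ∀ i ∈ X2, F ξ (Pi.single i 1) = s)
    (ξ0 : Fin N → ℝ) (hξ0 : ξ0 ∈ Ξ)
    (δ : ℝ) (hδ : 0 < δ)
    (hgap : Φ ξ - Φ ξ0 > δ)
    (hX3e : X3 = ∅) :
    X1.Nonempty ∧ sInf ((fun i => F ξ (Pi.single i 1)) '' X1) - s ≤ -δ := by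
  subst hΔ hΞ hX1 hX2 hX3
  obtain ⟨hξΔ, hξn⟩ := hmem
  obtain ⟨hξ0Δ, -⟩ := hξ0
  set g := fun i => F ξ (Pi.single i 1)
  have hsupp : ∀ i, ξ i ≠ 0 → g i = s := fun i hi =>
    hs i ⟨hξΔ.1 i |>.lt_of_ne' hi,
      (hξn i).lt_of_ne (Set.eq_empty_iff_forall_notMem.mp hX3e i)⟩
  have hs0 : s = 0 := by
    have hself := tendsto_slope_segment_self_eq_zero (hF ξ hξΔ ξ hξΔ)
    rwa [hlin ξ hξΔ ξ hξΔ, sum_mul_eq_of_forall_ne_zero fun i _ => hsupp i, hξΔ.2,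
      one_mul] at hself
  have hsum : ∑ i with ξ i = 0, ξ0 i * g i < -δ := by
    have hdesc := hconv.le_sub_of_tendsto_slope_segment hξΔ hξ0Δ (hF ξ hξΔ ξ0 hξ0Δ)
    rw [sum_filter_of_ne fun i _ h => by_contra fun hi => h (by rw [hsupp i hi, hs0, mul_zero])]
    linarith [hlin ξ hξΔ ξ0 hξ0Δ]
  obtain ⟨i, hi, hgi⟩ := exists_lt_of_sum_mul_lt (fun i _ => hξ0Δ.1 i)
    ((sum_le_univ_sum_of_nonneg hξ0Δ.1).trans_eq hξ0Δ.2) (neg_nonpos.mpr hδ.le) hsum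
  rw [mem_filter] at hi
  refine ⟨⟨i, hi.2⟩, ?_⟩
  have hinf : sInf (g '' {i | ξ i = 0}) ≤ g i :=
    csInf_le ((Set.toFinite _).image g).bddBelow ⟨i, hi.2, rfl⟩
  linarith

theorem stmt_8
    (N : ℕ) (hN : 1 ≤ N)
    (Δ : Set (Fin N → ℝ))
    (hΔ : Δ = {w : Fin N → ℝ | (∀ i, 0 ≤ w i) ∧ ∑ i, w i = 1})
    (Φ : (Fin N → ℝ) → ℝ)
    (hconv : ConvexOn ℝ Δ Φ)
    (F : (Fin N → ℝ) → (Fin N → ℝ) → ℝ)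
    (hF : ∀ ξ ∈ Δ, ∀ η ∈ Δ,
      Filter.Tendsto (fun α : ℝ => (Φ ((1 - α) • ξ + α • η) - Φ ξ) / α)
        (nhdsWithin 0 (Set.Ioi 0)) (nhds (F ξ η)))
    (hlin : ∀ ξ ∈ Δ, ∀ η ∈ Δ, F ξ η = ∑ i, η i * F ξ (Pi.single i 1))
    (n : ℕ) (hn1 : 1 ≤ n) (hnN : n ≤ N)
    (Ξ : Set (Fin N → ℝ))
    (hΞ : Ξ = {w : Fin N → ℝ | w ∈ Δ ∧ ∀ i, w i ≤ 1 / (n : ℝ)})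
    (ξ : Fin N → ℝ) (hmem : ξ ∈ Ξ)
    (X1 X2 X3 : Set (Fin N))
    (hX1 : X1 = {i | ξ i = 0})
    (hX2 : X2 = {i | 0 < ξ i ∧ ξ i < 1 / (n : ℝ)})
    (hX3 : X3 = {i | ξ i = 1 / (n : ℝ)})
    (s : ℝ) (hs : ∀ i ∈ X2, F ξ (Pi.single i 1) = s)
    (ξ0 : Fin N → ℝ) (hξ0 : ξ0 ∈ Ξ)
    (δ : ℝ) (hδ : 0 < δ)
    (hgap : Φ ξ - Φ ξ0 > δ)
    (hX2ne : X2.Nonempty) (hX3e : X3 = ∅) :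
    X1.Nonempty ∧ sInf ((fun i => F ξ (Pi.single i 1)) '' X1) - s ≤ -δ :=
  stmt_8_general N Δ hΔ Φ hconv F hF hlin n Ξ hΞ ξ hmem X1 X2 X3 hX1 hX2 hX3 s hs ξ0 hξ0 δ hδ hgap
    hX3e
end
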